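/- Let f : A(a, ∞) → ℝ be a Lipschitz function on the closed annulus {x ∈ ℝ² : |x| ≥ a} with Lipschitz constant L, and define its canonical extension f̃ : ℝ² → ℝ by: f̃ = f on the annulus, f̃(0) equals the mean value of f over the circle of radius a, and f̃ is affine (linear in r) along each radial segment from 0 to the circle of radius a. Then f̃ is Lipschitz with Lipschitz constant bounded by a universal constant times L. -/

import Mathlib

/-!
Inside the disc the extension is the cone `M + (‖x‖ / a) (f (a x / ‖x‖) - M)` with apex the mean `M`
of `f` over the circle. As `|f - M| ≤ 2 a L` on the circle, the radial slope of the cone is at most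
`2 L`; at radius `r` the radial projections of two points are at most `2 a / r` times as far apart as
the points, which the factor `r / a` compensates. So the cone is `4 L`-Lipschitz on the whole plane.
It agrees with `f` on the circle, and two points on opposite sides of the circle are compared through
the radial projection of the outer one, at the cost of a factor `3`.
-/

open MeasureTheory Metric

section RadialExtension

variable {E : Type*} [NormedAddCommGroup E] [NormedSpace ℝ E]

noncomputable def radialProj (a : ℝ) (x : E) : E := (a / ‖x‖) • x

lemma norm_radialProj {a : ℝ} (ha : 0 ≤ a) {x : E} (hx : x ≠ 0) : ‖radialProj a x‖ = a := by
  have : ‖x‖ ≠ 0 := norm_ne_zero_iff.mpr hx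
  rw [radialProj, norm_smul, Real.norm_eq_abs, abs_div, abs_of_nonneg ha, abs_norm,
    div_mul_cancel₀ _ this]

lemma norm_radialProj_sub_self (a : ℝ) {x : E} (hx : x ≠ 0) :
    ‖radialProj a x - x‖ = |a - ‖x‖| := by
  have : ‖x‖ ≠ 0 := norm_ne_zero_iff.mpr hx
  have hsub : radialProj a x - x = ((a - ‖x‖) / ‖x‖) • x := by
    rw [radialProj, sub_div, div_self this, sub_smul, one_smul]
  rw [hsub, norm_smul, Real.norm_eq_abs, abs_div, abs_norm, div_mul_cancel₀ _ this]

lemma norm_mul_norm_radialProj_sub_le {a : ℝ} (ha : 0 ≤ a) {x y : E} (hxy : ‖x‖ ≤ ‖y‖) :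
    ‖x‖ * ‖radialProj a x - radialProj a y‖ ≤ 2 * a * ‖x - y‖ := by
  rcases eq_or_ne x 0 with rfl | hx
  · simp only [norm_zero, zero_mul, zero_sub, norm_neg]
    positivity
  have hr : 0 < ‖x‖ := norm_pos_iff.mpr hx
  have hs : 0 < ‖y‖ := hr.trans_le hxy
  have hdecomp : radialProj a x - radialProj a y
      = (a / ‖x‖) • (x - y) + (a / ‖x‖ - a / ‖y‖) • y := by
    simp only [radialProj, smul_sub, sub_smul]
    abel
  have hcoef : 0 ≤ a / ‖x‖ - a / ‖y‖ := sub_nonneg.mpr (div_le_div_of_nonneg_left ha hr hxy)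
  have hradial : ‖y‖ - ‖x‖ ≤ ‖x - y‖ := norm_sub_rev x y ▸ norm_sub_norm_le y x
  calc ‖x‖ * ‖radialProj a x - radialProj a y‖
      ≤ ‖x‖ * ((a / ‖x‖) * ‖x - y‖ + (a / ‖x‖ - a / ‖y‖) * ‖y‖) := by
        rw [hdecomp]
        gcongr
        refine (norm_add_le _ _).trans_eq ?_
        rw [norm_smul_of_nonneg (by positivity), norm_smul_of_nonneg hcoef]
    _ = a * ‖x - y‖ + a * (‖y‖ - ‖x‖) := by
        field_simp
    _ ≤ 2 * a * ‖x - y‖ := by nlinarith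

noncomputable def coneExtension (a M : ℝ) (f : E → ℝ) (x : E) : ℝ :=
  (‖x‖ / a) * f (radialProj a x) + (1 - ‖x‖ / a) * M

lemma coneExtension_of_norm_eq {a M : ℝ} {f : E → ℝ} {x : E} (hx : ‖x‖ = a) (ha : a ≠ 0) :
    coneExtension a M f x = f x := by
  simp [coneExtension, radialProj, hx, ha]

section Cone

variable {a M : ℝ} {L : NNReal} {f : E → ℝ}

lemma abs_coneExtension_sub_le (ha : 0 < a) (hf : LipschitzOnWith L f (sphere 0 a))
    (hM : ∀ p ∈ sphere (0 : E) a, |f p - M| ≤ 2 * a * L) {x y : E} (hxy : ‖x‖ ≤ ‖y‖) :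
    |coneExtension a M f x - coneExtension a M f y| ≤ 4 * L * ‖x - y‖ := by
  rcases eq_or_ne y 0 with rfl | hy
  · rw [norm_le_zero_iff.mp (hxy.trans_eq norm_zero)]
    simp
  have hradial : ‖y‖ - ‖x‖ ≤ ‖x - y‖ := norm_sub_rev x y ▸ norm_sub_norm_le y x
  have hy_mem : radialProj a y ∈ sphere (0 : E) a := by
    simpa using norm_radialProj ha.le hy
  have hangular : ‖x‖ * |f (radialProj a x) - f (radialProj a y)| ≤ 2 * a * L * ‖x - y‖ := by
    rcases eq_or_ne x 0 with rfl | hx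
    · simp only [norm_zero, zero_mul]
      positivity
    have hx_mem : radialProj a x ∈ sphere (0 : E) a := by
      simpa using norm_radialProj ha.le hx
    calc ‖x‖ * |f (radialProj a x) - f (radialProj a y)|
        ≤ ‖x‖ * (L * ‖radialProj a x - radialProj a y‖) := by
          gcongr
          simpa [Real.dist_eq, dist_eq_norm] using hf.dist_le_mul _ hx_mem _ hy_mem
      _ = L * (‖x‖ * ‖radialProj a x - radialProj a y‖) := by ring
      _ ≤ L * (2 * a * ‖x - y‖) := by grw [norm_mul_norm_radialProj_sub_le ha.le hxy]
      _ = 2 * a * L * ‖x - y‖ := by ring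
  have hdecomp : coneExtension a M f x - coneExtension a M f y
      = (‖x‖ * (f (radialProj a x) - f (radialProj a y))
        + (‖y‖ - ‖x‖) * (M - f (radialProj a y))) / a := by
    simp only [coneExtension]
    field_simp
    ring
  rw [hdecomp, abs_div, abs_of_pos ha, div_le_iff₀ ha]
  calc |‖x‖ * (f (radialProj a x) - f (radialProj a y)) + (‖y‖ - ‖x‖) * (M - f (radialProj a y))|
      ≤ ‖x‖ * |f (radialProj a x) - f (radialProj a y)| + (‖y‖ - ‖x‖) * |f (radialProj a y) - M| := by
        refine (abs_add_le _ _).trans_eq ?_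
        rw [abs_mul, abs_mul, abs_norm, abs_of_nonneg (sub_nonneg.mpr hxy), abs_sub_comm M]
    _ ≤ 2 * a * L * ‖x - y‖ + ‖x - y‖ * (2 * a * L) := by
        gcongr
        exact hM _ hy_mem
    _ = 4 * L * ‖x - y‖ * a := by ring

theorem lipschitzWith_coneExtension (ha : 0 < a) (hf : LipschitzOnWith L f (sphere 0 a))
    (hM : ∀ p ∈ sphere (0 : E) a, |f p - M| ≤ 2 * a * L) :
    LipschitzWith (4 * L) (coneExtension a M f) := by
  refine LipschitzWith.of_dist_le_mul fun x y => ?_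
  simp only [dist_eq_norm, Real.norm_eq_abs, NNReal.coe_mul, NNReal.coe_ofNat]
  rcases le_total ‖x‖ ‖y‖ with hxy | hyx
  · exact abs_coneExtension_sub_le ha hf hM hxy
  · rw [abs_sub_comm, norm_sub_rev]
    exact abs_coneExtension_sub_le ha hf hM hyx

end Cone

section Gluing

variable {α : Type*} [PseudoMetricSpace α] {a : ℝ} {K : NNReal} {g h : E → α}

lemma dist_le_of_norm_lt_of_le_norm (hg : LipschitzOnWith K g {x | ‖x‖ ≤ a})
    (hh : LipschitzOnWith K h {x | a ≤ ‖x‖}) (hgh : ∀ x, ‖x‖ = a → g x = h x)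
    {x y : E} (hx : ‖x‖ < a) (hy : a ≤ ‖y‖) :
    dist (g x) (h y) ≤ 3 * K * dist x y := by
  have ha : 0 < a := (norm_nonneg x).trans_lt hx
  have hy0 : y ≠ 0 := by rintro rfl; simp at hy; linarith
  set p := radialProj a y
  have hp : ‖p‖ = a := norm_radialProj ha.le hy0
  have hpy : ‖p - y‖ = ‖y‖ - a := by
    rw [norm_radialProj_sub_self a hy0, abs_of_nonpos (by linarith), neg_sub]
  have hradial : ‖y‖ - a ≤ ‖x - y‖ := by
    linarith [norm_sub_rev x y ▸ norm_sub_norm_le y x]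
  calc dist (g x) (h y) ≤ dist (g x) (g p) + dist (h p) (h y) := by
        rw [hgh p hp]; exact dist_triangle _ _ _
    _ ≤ K * ‖x - p‖ + K * ‖p - y‖ := by
        rw [← dist_eq_norm, ← dist_eq_norm]
        gcongr
        · exact hg.dist_le_mul _ (by simpa using hx.le) _ (by simpa using hp.le)
        · exact hh.dist_le_mul _ (by simpa using hp.ge) _ (by simpa using hy)
    _ ≤ K * (‖x - y‖ + ‖p - y‖) + K * ‖p - y‖ := by
        gcongr
        simpa using norm_sub_le (x - y) (p - y)
    _ ≤ 3 * K * dist x y := by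
        rw [dist_eq_norm, hpy]
        nlinarith [K.coe_nonneg]

theorem lipschitzWith_ite_le_norm (hg : LipschitzOnWith K g {x | ‖x‖ ≤ a})
    (hh : LipschitzOnWith K h {x | a ≤ ‖x‖}) (hgh : ∀ x, ‖x‖ = a → g x = h x) :
    LipschitzWith (3 * K) (fun x => if a ≤ ‖x‖ then h x else g x) := by
  have hK : (K : ℝ) ≤ 3 * K := by linarith [K.coe_nonneg]
  refine LipschitzWith.of_dist_le_mul fun x y => ?_
  push_cast
  by_cases hx : a ≤ ‖x‖ <;> by_cases hy : a ≤ ‖y‖ <;> simp only [hx, hy, if_true, if_false]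
  · exact (hh.dist_le_mul x hx y hy).trans (by gcongr)
  · rw [dist_comm, dist_comm x]
    exact dist_le_of_norm_lt_of_le_norm hg hh hgh (not_le.mp hy) hx
  · exact dist_le_of_norm_lt_of_le_norm hg hh hgh (not_le.mp hx) hy
  · exact (hg.dist_le_mul x (not_le.mp hx).le y (not_le.mp hy).le).trans (by gcongr)

end Gluing

end RadialExtension

lemma abs_sub_intervalAverage_le {g : ℝ → ℝ} {T c B : ℝ} (hT : 0 < T)
    (hg : IntervalIntegrable g volume 0 T) (hB : ∀ θ ∈ Set.Ioc 0 T, |c - g θ| ≤ B) :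
    |c - T⁻¹ * ∫ θ in (0 : ℝ)..T, g θ| ≤ B := by
  have hshift : c - T⁻¹ * ∫ θ in (0 : ℝ)..T, g θ = T⁻¹ * ∫ θ in (0 : ℝ)..T, (c - g θ) := by
    rw [intervalIntegral.integral_sub intervalIntegrable_const hg, intervalIntegral.integral_const,
      smul_eq_mul]
    field_simp
    ring
  have hint : ‖∫ θ in (0 : ℝ)..T, (c - g θ)‖ ≤ B * |T - 0| :=
    intervalIntegral.norm_integral_le_of_norm_le_const fun θ hθ =>
      hB θ (Set.uIoc_of_le hT.le ▸ hθ)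
  rw [hshift, abs_mul, abs_inv, abs_of_pos hT, inv_mul_le_iff₀ hT]
  simpa [abs_of_pos hT, mul_comm] using hint

section Circle

open Real

noncomputable def circlePoint (a θ : ℝ) : EuclideanSpace ℝ (Fin 2) :=
  (EuclideanSpace.equiv (Fin 2) ℝ).symm ![a * cos θ, a * sin θ]

noncomputable def circleMean (a : ℝ) (f : EuclideanSpace ℝ (Fin 2) → ℝ) : ℝ :=
  (2 * π)⁻¹ * ∫ θ in (0 : ℝ)..(2 * π), f (circlePoint a θ)

lemma norm_circlePoint {a : ℝ} (ha : 0 ≤ a) (θ : ℝ) : ‖circlePoint a θ‖ = a := by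
  simp only [circlePoint, EuclideanSpace.norm_eq, PiLp.continuousLinearEquiv_symm_apply,
    Real.norm_eq_abs, sq_abs, Fin.sum_univ_two, Matrix.cons_val_zero, Matrix.cons_val_one,
    Matrix.cons_val_fin_one, mul_pow]
  rw [← mul_add, cos_sq_add_sin_sq, mul_one, sqrt_sq ha]

lemma continuous_circlePoint (a : ℝ) : Continuous (circlePoint a) := by
  refine (EuclideanSpace.equiv (Fin 2) ℝ).symm.continuous.comp (continuous_pi fun i => ?_)
  fin_cases i <;> simp only [Fin.zero_eta, Fin.mk_one, Matrix.cons_val_zero, Matrix.cons_val_one,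
    Matrix.cons_val_fin_one] <;> fun_prop

lemma abs_sub_circleMean_le {a : ℝ} (ha : 0 ≤ a) {L : NNReal} {f : EuclideanSpace ℝ (Fin 2) → ℝ}
    (hf : LipschitzOnWith L f (sphere 0 a)) {p : EuclideanSpace ℝ (Fin 2)} (hp : p ∈ sphere 0 a) :
    |f p - circleMean a f| ≤ 2 * a * L := by
  have hcircle : ∀ θ, circlePoint a θ ∈ sphere (0 : EuclideanSpace ℝ (Fin 2)) a := fun θ => by
    simpa using norm_circlePoint ha θ
  have hcont : Continuous fun θ => f (circlePoint a θ) :=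
    hf.continuousOn.comp_continuous (continuous_circlePoint a) hcircle
  refine abs_sub_intervalAverage_le (by positivity) (hcont.intervalIntegrable _ _) fun θ _ => ?_
  calc |f p - f (circlePoint a θ)| ≤ L * dist p (circlePoint a θ) := by
        simpa [Real.dist_eq] using hf.dist_le_mul _ hp _ (hcircle θ)
    _ ≤ L * (a + a) := by
        gcongr
        refine (dist_le_norm_add_norm _ _).trans_eq ?_
        rw [mem_sphere_zero_iff_norm.mp hp, norm_circlePoint ha]
    _ = 2 * a * L := by ring

end Circle

/-- The canonical extension of a Lipschitz function on the annulus `{‖x‖ ≥ a}`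
(extended radially-affinely inside, with value at the origin the mean value of
`f` over the circle of radius `a`) is Lipschitz, with constant bounded by a
universal constant times the Lipschitz constant of `f`. -/
theorem stmt_12 :
    ∃ C : NNReal, ∀ a : ℝ, 0 < a →
      ∀ (f : EuclideanSpace ℝ (Fin 2) → ℝ) (L : NNReal),
        LipschitzOnWith L f {x | a ≤ ‖x‖} →
        LipschitzWith (C * L) (fun x : EuclideanSpace ℝ (Fin 2) =>
          if a ≤ ‖x‖ then f x
          else (‖x‖ / a) * f ((a / ‖x‖) • x) + (1 - ‖x‖ / a) *
            ((2 * Real.pi)⁻¹ * ∫ θ in (0:ℝ)..(2 * Real.pi),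
              f ((EuclideanSpace.equiv (Fin 2) ℝ).symm
                ![a * Real.cos θ, a * Real.sin θ]))) := by
  refine ⟨12, fun a ha f L hf => ?_⟩
  have hsphere : LipschitzOnWith L f (sphere 0 a) :=
    hf.mono fun x hx => (mem_sphere_zero_iff_norm.mp hx).ge
  have hcone : LipschitzWith (4 * L) (coneExtension a (circleMean a f) f) :=
    lipschitzWith_coneExtension ha hsphere fun p hp => abs_sub_circleMean_le ha.le hsphere hp
  have hglued := lipschitzWith_ite_le_norm hcone.lipschitzOnWith
    (hf.weaken (le_mul_of_one_le_left (by positivity) (by norm_num)))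
    fun x hx => coneExtension_of_norm_eq hx ha.ne'
  rw [show (12 : NNReal) * L = 3 * (4 * L) by ring]
  exact hglued
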